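/- For every real x ≥ 0 and all integers m ≥ 0, n ≥ 0: P(V^#_{m+n+2} ≤ x) ≥ P(ξ₁ ≤ 0)² · P(V^#_m ≤ x and S_m − min_{0≤k≤m} S_k ≤ x/2) · P(V^#_n ≤ x and max_{0≤k≤n} S_k ≤ x/2). -/

import Mathlib

open MeasureTheory ProbabilityTheory Filter

noncomputable section

/-- The random walk `S_n = ξ₁ + ⋯ + ξ_n` associated with the steps `ξ`. -/
def walk {Ω : Type*} (ξ : ℕ → Ω → ℝ) (n : ℕ) (ω : Ω) : ℝ :=
  ∑ i ∈ Finset.range n, ξ i ω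

/-- `max_{0 ≤ k ≤ n} S_k`. -/
def walkMax {Ω : Type*} (ξ : ℕ → Ω → ℝ) (n : ℕ) (ω : Ω) : ℝ :=
  (Finset.range (n + 1)).sup' Finset.nonempty_range_add_one fun k => walk ξ k ω

/-- `min_{0 ≤ k ≤ n} S_k`. -/
def walkMin {Ω : Type*} (ξ : ℕ → Ω → ℝ) (n : ℕ) (ω : Ω) : ℝ :=
  (Finset.range (n + 1)).inf' Finset.nonempty_range_add_one fun k => walk ξ k ω

/-- `V^#_n = max_{0 ≤ u ≤ v ≤ n} (S_v - S_u)`, the supremum of the reflected walk. -/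
def reflMax {Ω : Type*} (ξ : ℕ → Ω → ℝ) (n : ℕ) (ω : Ω) : ℝ :=
  (Finset.range (n + 1)).sup' Finset.nonempty_range_add_one fun v =>
    (Finset.range (v + 1)).sup' Finset.nonempty_range_add_one fun u =>
      walk ξ v ω - walk ξ u ω

/-! On the event that the first `m` steps have range at most `x` and end within `x / 2` of their
minimum, the next two steps are nonpositive, and the last `n` steps have range at most `x` and
never rise more than `x / 2` above their starting point, the whole walk has range at most `x`:
a rise from a time in the first block to a time in the last one is at most `x / 2 + x / 2`.
The constraints concern disjoint blocks of steps, so by independence their probability is the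
product of the block probabilities, and by stationarity of the i.i.d. steps the last block has the
same law as the first `n` steps. -/

section Pathwise

variable {Ω : Type*} {ξ : ℕ → Ω → ℝ} {ω : Ω} {x y z : ℝ}

lemma reflMax_le_iff {n : ℕ} :
    reflMax ξ n ω ≤ x ↔ ∀ v ≤ n, ∀ u ≤ v, walk ξ v ω - walk ξ u ω ≤ x := by
  simp [reflMax, Finset.sup'_le_iff]

lemma walkMax_le_iff {n : ℕ} : walkMax ξ n ω ≤ y ↔ ∀ k ≤ n, walk ξ k ω ≤ y := by
  simp [walkMax, Finset.sup'_le_iff]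

lemma sub_walkMin_le_iff {n : ℕ} :
    walk ξ n ω - walkMin ξ n ω ≤ y ↔ ∀ k ≤ n, walk ξ n ω - walk ξ k ω ≤ y := by
  rw [sub_le_comm, walkMin, Finset.le_inf'_iff]
  simp only [Finset.mem_range, Nat.lt_succ_iff]
  exact forall₂_congr fun _ _ ↦ sub_le_comm

lemma walk_succ (k : ℕ) : walk ξ (k + 1) ω = walk ξ k ω + ξ k ω :=
  Finset.sum_range_succ _ _

lemma walk_add (c n : ℕ) : walk ξ (c + n) ω = walk ξ c ω + walk (fun i ↦ ξ (c + i)) n ω :=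
  Finset.sum_range_add _ _ _

lemma reflMax_succ_le_and_sub_walkMin_succ_le {k : ℕ} (hV : reflMax ξ k ω ≤ x)
    (hD : walk ξ k ω - walkMin ξ k ω ≤ y) (hξ : ξ k ω ≤ 0) (hy : 0 ≤ y) (hyx : y ≤ x) :
    reflMax ξ (k + 1) ω ≤ x ∧ walk ξ (k + 1) ω - walkMin ξ (k + 1) ω ≤ y := by
  rw [reflMax_le_iff] at hV ⊢
  rw [sub_walkMin_le_iff] at hD ⊢
  have hD' : ∀ u ≤ k + 1, walk ξ (k + 1) ω - walk ξ u ω ≤ y := by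
    intro u hu
    rcases Nat.of_le_succ hu with hu | rfl
    · linarith [hD u hu, walk_succ (ξ := ξ) (ω := ω) k]
    · simpa using hy
  refine ⟨fun v hv u hu ↦ ?_, hD'⟩
  rcases Nat.of_le_succ hv with hv | rfl
  · exact hV v hv u hu
  · exact (hD' u hu).trans hyx

lemma reflMax_add_le {c n : ℕ} (hV : reflMax ξ c ω ≤ x) (hD : walk ξ c ω - walkMin ξ c ω ≤ y)
    (hV' : reflMax (fun i ↦ ξ (c + i)) n ω ≤ x) (hM' : walkMax (fun i ↦ ξ (c + i)) n ω ≤ z)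
    (hyzx : y + z ≤ x) : reflMax ξ (c + n) ω ≤ x := by
  rw [reflMax_le_iff] at hV hV' ⊢
  rw [sub_walkMin_le_iff] at hD
  rw [walkMax_le_iff] at hM'
  intro v hv u hu
  by_cases hvc : v ≤ c
  · exact hV v hvc u hu
  obtain ⟨w, rfl⟩ := Nat.exists_eq_add_of_le (not_le.1 hvc).le
  rw [walk_add]
  by_cases huc : u ≤ c
  · linarith [hD u huc, hM' w (by omega)]
  obtain ⟨t, rfl⟩ := Nat.exists_eq_add_of_le (not_le.1 huc).le
  rw [walk_add]
  linarith [hV' w (by omega) t (by omega)]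

end Pathwise

section Measurability

variable {Ω : Type*} {mΩ : MeasurableSpace Ω} {ξ : ℕ → Ω → ℝ} {n : ℕ}

lemma measurable_walk (h : ∀ i < n, Measurable (ξ i)) : Measurable (walk ξ n) :=
  Finset.measurable_sum _ fun i hi ↦ h i (Finset.mem_range.1 hi)

lemma measurable_reflMax (h : ∀ i < n, Measurable (ξ i)) : Measurable (reflMax ξ n) := by
  have hwalk : ∀ k ≤ n, Measurable (walk ξ k) := fun k hk ↦
    measurable_walk fun i hi ↦ h i (by omega)
  exact Finset.measurable_range_sup'' fun v hv ↦
    Finset.measurable_range_sup'' fun u hu ↦ (hwalk v hv).sub (hwalk u (hu.trans hv))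

lemma measurable_walkMax (h : ∀ i < n, Measurable (ξ i)) : Measurable (walkMax ξ n) :=
  Finset.measurable_range_sup'' fun k hk ↦ measurable_walk fun i hi ↦ h i (by omega)

lemma measurable_walkMin (h : ∀ i < n, Measurable (ξ i)) : Measurable (walkMin ξ n) := by
  have : walkMin ξ n = (Finset.range (n + 1)).inf' Finset.nonempty_range_add_one (walk ξ) := by
    ext ω; simp [walkMin, Finset.inf'_apply]
  rw [this]
  refine Finset.inf'_induction _ _ (fun _ hf _ hg ↦ hf.inf hg) fun k hk ↦ ?_
  exact measurable_walk fun i hi ↦ h i (hi.trans_le (Nat.lt_succ_iff.1 (Finset.mem_range.1 hk)))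

lemma measurableSet_reflMax_le_and_sub_walkMin_le (h : ∀ i < n, Measurable (ξ i)) (x y : ℝ) :
    MeasurableSet {ω | reflMax ξ n ω ≤ x ∧ walk ξ n ω - walkMin ξ n ω ≤ y} :=
  (measurableSet_le (measurable_reflMax h) measurable_const).inter
    (measurableSet_le ((measurable_walk h).sub (measurable_walkMin h)) measurable_const)

lemma measurableSet_reflMax_le_and_walkMax_le (h : ∀ i < n, Measurable (ξ i)) (x z : ℝ) :
    MeasurableSet {ω | reflMax ξ n ω ≤ x ∧ walkMax ξ n ω ≤ z} :=
  (measurableSet_le (measurable_reflMax h) measurable_const).inter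
    (measurableSet_le (measurable_walkMax h) measurable_const)

end Measurability

section Independence

variable {Ω : Type*}

abbrev stepSigma (ξ : ℕ → Ω → ℝ) (S : Set ℕ) : MeasurableSpace Ω :=
  ⨆ i ∈ S, MeasurableSpace.comap (ξ i) inferInstance

lemma measurable_stepSigma {ξ : ℕ → Ω → ℝ} {S : Set ℕ} {i : ℕ} (hi : i ∈ S) :
    Measurable[stepSigma ξ S] (ξ i) :=
  (comap_measurable (ξ i)).mono (le_iSup₂ (f := fun j _ ↦ MeasurableSpace.comap (ξ j) _) i hi)
    le_rfl

variable [MeasurableSpace Ω] {P : Measure Ω} {ξ : ℕ → Ω → ℝ}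

lemma measure_inter_eq_mul_of_disjoint (hmeas : ∀ i, Measurable (ξ i)) (hindep : iIndepFun ξ P)
    {S T : Set ℕ} (hST : Disjoint S T) {s t : Set Ω} (hs : MeasurableSet[stepSigma ξ S] s)
    (ht : MeasurableSet[stepSigma ξ T] t) : P (s ∩ t) = P s * P t :=
  (Indep_iff _ _ _).1
    (indep_iSup_of_disjoint (fun i ↦ (hmeas i).comap_le) hindep.iIndep hST) s t hs ht

lemma identDistrib_shift (hmeas : ∀ i, Measurable (ξ i)) (hindep : iIndepFun ξ P)
    (hident : ∀ i, IdentDistrib (ξ i) (ξ 0) P P) (c : ℕ) :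
    IdentDistrib (fun ω i ↦ ξ (c + i) ω) (fun ω i ↦ ξ i ω) P P where
  aemeasurable_fst := (measurable_pi_lambda _ fun i ↦ hmeas (c + i)).aemeasurable
  aemeasurable_snd := (measurable_pi_lambda _ hmeas).aemeasurable
  map_eq := by
    rw [(hindep.precomp (add_right_injective c)).map_fun_eq_infinitePi_map (fun i ↦ hmeas _),
      hindep.map_fun_eq_infinitePi_map hmeas]
    simp only [fun i ↦ (hident i).map_eq]

variable {x y z : ℝ}

lemma measure_mul_le_measure_succ (hmeas : ∀ i, Measurable (ξ i)) (hindep : iIndepFun ξ P)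
    (hident : ∀ i, IdentDistrib (ξ i) (ξ 0) P P) (hy : 0 ≤ y) (hyx : y ≤ x) (k : ℕ) :
    P {ω | reflMax ξ k ω ≤ x ∧ walk ξ k ω - walkMin ξ k ω ≤ y} * P {ω | ξ 0 ω ≤ 0}
      ≤ P {ω | reflMax ξ (k + 1) ω ≤ x ∧ walk ξ (k + 1) ω - walkMin ξ (k + 1) ω ≤ y} := by
  have hA := measurableSet_reflMax_le_and_sub_walkMin_le (mΩ := stepSigma ξ (Set.Iio k))
    (ξ := ξ) (fun i hi ↦ measurable_stepSigma hi) x y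
  have hstep : MeasurableSet[stepSigma ξ {k}] {ω | ξ k ω ≤ 0} :=
    measurableSet_le (measurable_stepSigma rfl) measurable_const
  calc _ = P {ω | reflMax ξ k ω ≤ x ∧ walk ξ k ω - walkMin ξ k ω ≤ y} * P {ω | ξ k ω ≤ 0} := by
        congr 1; exact ((hident k).measure_mem_eq measurableSet_Iic).symm
    _ = P ({ω | reflMax ξ k ω ≤ x ∧ walk ξ k ω - walkMin ξ k ω ≤ y} ∩ {ω | ξ k ω ≤ 0}) :=
        (measure_inter_eq_mul_of_disjoint hmeas hindep (by simp) hA hstep).symm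
    _ ≤ _ := measure_mono fun ω ⟨⟨hV, hD⟩, hξ⟩ ↦
        reflMax_succ_le_and_sub_walkMin_succ_le hV hD hξ hy hyx

lemma measure_mul_le_measure_add (hmeas : ∀ i, Measurable (ξ i)) (hindep : iIndepFun ξ P)
    (hident : ∀ i, IdentDistrib (ξ i) (ξ 0) P P) (hyzx : y + z ≤ x) (c n : ℕ) :
    P {ω | reflMax ξ c ω ≤ x ∧ walk ξ c ω - walkMin ξ c ω ≤ y}
        * P {ω | reflMax ξ n ω ≤ x ∧ walkMax ξ n ω ≤ z}
      ≤ P {ω | reflMax ξ (c + n) ω ≤ x} := by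
  set ξ' : ℕ → Ω → ℝ := fun i ↦ ξ (c + i)
  have hlaw : P {ω | reflMax ξ' n ω ≤ x ∧ walkMax ξ' n ω ≤ z}
      = P {ω | reflMax ξ n ω ≤ x ∧ walkMax ξ n ω ≤ z} :=
    (identDistrib_shift hmeas hindep hident c).measure_mem_eq
      (measurableSet_reflMax_le_and_walkMax_le (ξ := fun i (f : ℕ → ℝ) ↦ f i)
        (fun i _ ↦ measurable_pi_apply i) x z)
  have hA := measurableSet_reflMax_le_and_sub_walkMin_le (mΩ := stepSigma ξ (Set.Iio c))
    (ξ := ξ) (fun i hi ↦ measurable_stepSigma hi) x y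
  have hB := measurableSet_reflMax_le_and_walkMax_le (mΩ := stepSigma ξ (Set.Ici c))
    (ξ := ξ') (n := n) (fun i _ ↦ measurable_stepSigma (by simp)) x z
  rw [← hlaw, ← measure_inter_eq_mul_of_disjoint hmeas hindep (Set.Iio_disjoint_Ici le_rfl) hA hB]
  exact measure_mono fun ω ⟨⟨hV, hD⟩, hV', hM'⟩ ↦ reflMax_add_le hV hD hV' hM' hyzx

end Independence

/-- For every `x ≥ 0` and integers `m, n ≥ 0`:
`P(V^#_{m+n+2} ≤ x) ≥ P(ξ₁ ≤ 0)² ⬝ P(V^#_m ≤ x, S_m - min_{0≤k≤m} S_k ≤ x/2)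
  ⬝ P(V^#_n ≤ x, max_{0≤k≤n} S_k ≤ x/2)`. -/
theorem reflMax_superadditivity_step
    {Ω : Type*} [MeasurableSpace Ω] (P : Measure Ω) [IsProbabilityMeasure P]
    (ξ : ℕ → Ω → ℝ) (hmeas : ∀ i, Measurable (ξ i))
    (hindep : iIndepFun ξ P)
    (hident : ∀ i, IdentDistrib (ξ i) (ξ 0) P P)
    (x : ℝ) (hx : 0 ≤ x) (m n : ℕ) :
    (P {ω | ξ 0 ω ≤ 0}).toReal ^ 2
        * (P {ω | reflMax ξ m ω ≤ x ∧ walk ξ m ω - walkMin ξ m ω ≤ x / 2}).toReal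
        * (P {ω | reflMax ξ n ω ≤ x ∧ walkMax ξ n ω ≤ x / 2}).toReal
      ≤ (P {ω | reflMax ξ (m + n + 2) ω ≤ x}).toReal := by
  have hy : 0 ≤ x / 2 := by positivity
  have hyx : x / 2 ≤ x := by linarith
  have extend := measure_mul_le_measure_succ hmeas hindep hident hy hyx
  rw [← ENNReal.toReal_pow, ← ENNReal.toReal_mul, ← ENNReal.toReal_mul]
  refine ENNReal.toReal_mono (measure_ne_top P _) ?_
  calc P {ω | ξ 0 ω ≤ 0} ^ 2
        * P {ω | reflMax ξ m ω ≤ x ∧ walk ξ m ω - walkMin ξ m ω ≤ x / 2}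
        * P {ω | reflMax ξ n ω ≤ x ∧ walkMax ξ n ω ≤ x / 2}
      = P {ω | reflMax ξ m ω ≤ x ∧ walk ξ m ω - walkMin ξ m ω ≤ x / 2}
          * P {ω | ξ 0 ω ≤ 0} * P {ω | ξ 0 ω ≤ 0}
          * P {ω | reflMax ξ n ω ≤ x ∧ walkMax ξ n ω ≤ x / 2} := by ring
    _ ≤ P {ω | reflMax ξ (m + 2) ω ≤ x ∧ walk ξ (m + 2) ω - walkMin ξ (m + 2) ω ≤ x / 2}
          * P {ω | reflMax ξ n ω ≤ x ∧ walkMax ξ n ω ≤ x / 2} := by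
      gcongr
      exact (mul_le_mul_left (extend m) _).trans (extend (m + 1))
    _ ≤ P {ω | reflMax ξ (m + n + 2) ω ≤ x} := by
      rw [add_right_comm]
      exact measure_mul_le_measure_add hmeas hindep hident (add_halves x).le (m + 2) n
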